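/- Let X have MEV distribution with unit Fréchet margins and tail dependence function l, and let I = {I₁,...,I_p} partition {1,...,d}. With λ = (1,...,1), R(X,1,I) = ε_X/(1+ε_X) − Σ_{∅≠T⊆{1,...,p}} (−1)^{|T|+1} ε_{X_{∪_{j∈T} I_j}}/(1 + ε_{X_{∪_{j∈T} I_j}}), where ε_{X_S} = l(δ₁(S),...,δ_d(S)) is the extremal coefficient of the subvector indexed by S ⊆ {1,...,d} and ε_X = ε_{X_{{1,...,d}}}. -/

import Mathlib

open MeasureTheory Finset

/-- Unit Fréchet distribution function F(x) = exp(-1/x). -/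
noncomputable def frechetCDF (x : ℝ) : ℝ := Real.exp (-x⁻¹)

/-!
Max-stability, applied with the thresholds of the coordinates outside `S` sent to `+∞`, gives
`P(max_{i ∈ S} X_i ≤ t) = exp(-ε_S / t)`. Hence `F(max_{i ∈ S} X_i)` has distribution function
`u ↦ u ^ ε_S` on `(0, 1)` and mean `ε_S / (1 + ε_S)`. As `F` is increasing on `(0, ∞)`, where the
`X_i` live almost surely, `max_{j ∈ T} F(M(I_j)) = F(M(⋃_{j ∈ T} I_j))`. It remains to write
`min_j F(M(I_j))` through the max–min identity `min_j a_j = ∑_{∅ ≠ T} (-1)^(|T|+1) max_{j ∈ T} a_j`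
and to integrate term by term.
-/

open Filter Topology

section MaxMinIdentity

variable {ι R : Type*} [CommRing R] [LinearOrder R]

def supOrZero (f : ι → R) (T : Finset ι) : R :=
  if h : T.Nonempty then T.sup' h f else 0

@[simp] lemma supOrZero_empty (f : ι → R) : supOrZero f ∅ = 0 :=
  dif_neg Finset.not_nonempty_empty

lemma supOrZero_of_nonempty (f : ι → R) {T : Finset ι} (hT : T.Nonempty) :
    supOrZero f T = T.sup' hT f :=
  dif_pos hT

lemma supOrZero_insert [DecidableEq ι] (f : ι → R) (a : ι) {T : Finset ι} (hT : T.Nonempty) :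
    supOrZero f (insert a T) = supOrZero (fun i ↦ f a ⊔ f i) T := by
  rw [supOrZero_of_nonempty _ (insert_nonempty a T), supOrZero_of_nonempty _ hT, sup'_insert]
  exact apply_sup'_eq_sup'_comp hT (f a ⊔ ·) (sup_sup_distrib_left (f a))

lemma inf'_eq_sum_powerset_supOrZero [DecidableEq ι] {S : Finset ι} (hS : S.Nonempty)
    (f : ι → R) : S.inf' hS f = ∑ T ∈ S.powerset, (-1) ^ (T.card + 1) * supOrZero f T := by
  induction hS using Finset.Nonempty.cons_induction generalizing f with
  | singleton a =>
    rw [inf'_singleton, ← insert_empty, sum_powerset_insert (notMem_empty a)]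
    simp [supOrZero_of_nonempty]
  | cons a s ha hs ih =>
    have hinsert : ∀ T ∈ s.powerset,
        (-1 : R) ^ ((insert a T).card + 1) * supOrZero f (insert a T) =
          (if T = ∅ then f a else 0) - (-1) ^ (T.card + 1) * supOrZero (fun i ↦ f a ⊔ f i) T := by
      intro T hT
      rw [card_insert_of_notMem fun h ↦ ha (mem_powerset.1 hT h)]
      rcases T.eq_empty_or_nonempty with rfl | hT
      · simp [supOrZero_of_nonempty]
      · rw [supOrZero_insert f a hT, if_neg hT.ne_empty]
        ring
    rw [inf'_cons hs, cons_eq_insert, sum_powerset_insert ha, sum_congr rfl hinsert,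
      sum_sub_distrib, sum_ite_eq', if_pos (empty_mem_powerset s), ← ih, ← ih,
      ← inf'_sup_distrib_left]
    linear_combination (min_add_max (f a) (s.inf' hs f))

lemma inf'_eq_sum_powerset_erase_supOrZero [DecidableEq ι] {S : Finset ι} (hS : S.Nonempty)
    (f : ι → R) :
    S.inf' hS f = ∑ T ∈ S.powerset.erase ∅, (-1) ^ (T.card + 1) * supOrZero f T := by
  rw [sum_erase _ (by simp), inf'_eq_sum_powerset_supOrZero]

end MaxMinIdentity

lemma integral_eq_div_one_add_of_measure_le_eq_rpow {Ω : Type*} [MeasurableSpace Ω]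
    {μ : Measure Ω} [IsProbabilityMeasure μ] {Y : Ω → ℝ} (hY : Integrable Y μ)
    (hY0 : 0 ≤ᵐ[μ] Y) (hY1 : ∀ᵐ ω ∂μ, Y ω ≤ 1) {e : ℝ} (he : -1 < e)
    (hcdf : ∀ u ∈ Set.Ioo (0 : ℝ) 1, μ.real {ω | Y ω ≤ u} = u ^ e) :
    ∫ ω, Y ω ∂μ = e / (1 + e) := by
  have hnull : ∀ t, 1 ≤ t → μ.real {ω | t < Y ω} = 0 := fun t ht ↦ by
    have : μ {ω | t < Y ω} = 0 :=
      measure_mono_null (fun ω (hω : t < Y ω) ↦ (ht.trans_lt hω).not_ge) (ae_iff.1 hY1)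
    rw [measureReal_def, this, ENNReal.toReal_zero]
  have htail : Set.EqOn (fun t ↦ μ.real {ω | t < Y ω}) (fun t ↦ 1 - t ^ e) (Set.Ioc 0 1) := by
    rintro t ⟨ht0, ht1⟩
    rcases ht1.lt_or_eq with ht1 | rfl
    · have hmeas : NullMeasurableSet {ω | Y ω ≤ t} μ :=
        hY.aemeasurable.nullMeasurable measurableSet_Iic
      dsimp only
      rw [← hcdf t ⟨ht0, ht1⟩, ← probReal_compl_eq_one_sub₀ hmeas]
      simp only [Set.compl_ofPred, not_le]
    · simp [hnull 1 le_rfl]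
  rw [hY.integral_eq_integral_meas_lt hY0, setIntegral_eq_of_subset_of_forall_sdiff_eq_zero
      measurableSet_Ioi Set.Ioc_subset_Ioi_self fun t ht ↦ hnull t ?_,
    setIntegral_congr_fun measurableSet_Ioc htail, ← intervalIntegral.integral_of_le zero_le_one,
    intervalIntegral.integral_sub intervalIntegrable_const
      (intervalIntegral.intervalIntegrable_rpow' he), integral_rpow (Or.inl he)]
  · have : 1 + e ≠ 0 := by linarith
    rw [intervalIntegral.integral_const, Real.one_rpow, Real.zero_rpow (by linarith)]
    simp only [sub_zero, smul_eq_mul, mul_one, add_comm e 1]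
    field_simp
    ring
  · simp only [Set.mem_sdiff, Set.mem_Ioi, Set.mem_Ioc, not_and, not_le] at ht
    exact (ht.2 ht.1).le

section Frechet

lemma frechetCDF_nonneg (x : ℝ) : 0 ≤ frechetCDF x := (Real.exp_pos _).le

lemma frechetCDF_le_one {x : ℝ} (hx : 0 ≤ x) : frechetCDF x ≤ 1 :=
  Real.exp_le_one_iff.2 (neg_nonpos.2 (inv_nonneg.2 hx))

lemma frechetCDF_le_frechetCDF_iff {x y : ℝ} (hx : 0 < x) (hy : 0 < y) :
    frechetCDF x ≤ frechetCDF y ↔ x ≤ y := by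
  rw [frechetCDF, frechetCDF, Real.exp_le_exp, neg_le_neg_iff, inv_le_inv₀ hy hx]

lemma frechetCDF_inv_neg_log {u : ℝ} (hu : 0 < u) : frechetCDF (-Real.log u)⁻¹ = u := by
  rw [frechetCDF, inv_inv, neg_neg, Real.exp_log hu]

lemma measurable_frechetCDF : Measurable frechetCDF := by
  unfold frechetCDF
  fun_prop

lemma tendsto_frechetCDF_nhdsGT_zero : Tendsto frechetCDF (𝓝[>] 0) (𝓝 0) :=
  Real.tendsto_exp_atBot.comp (tendsto_neg_atTop_atBot.comp tendsto_inv_nhdsGT_zero)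

lemma frechetCDF_sup' {κ : Type*} {s : Finset κ} (hs : s.Nonempty) {f : κ → ℝ}
    (hf : ∀ i ∈ s, 0 < f i) : frechetCDF (s.sup' hs f) = s.sup' hs (frechetCDF ∘ f) := by
  obtain ⟨i, hi, hmax⟩ := exists_mem_eq_sup' hs f
  refine le_antisymm ?_ (sup'_le hs _ fun j hj ↦ ?_)
  · rw [hmax]
    exact le_sup' (frechetCDF ∘ f) hi
  · exact (frechetCDF_le_frechetCDF_iff (hf j hj) ((hf j hj).trans_le (le_sup' f hj))).2
      (le_sup' f hj)

lemma frechetCDF_sup'_biUnion {κ ι : Type*} [DecidableEq ι] {T : Finset κ} (hT : T.Nonempty)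
    {I : κ → Finset ι} (hI : ∀ j, (I j).Nonempty) {x : ι → ℝ} (hx : ∀ i, 0 < x i) :
    T.sup' hT (fun j ↦ frechetCDF ((I j).sup' (hI j) x)) =
      frechetCDF ((T.biUnion I).sup' (hT.biUnion fun j _ ↦ hI j) x) := by
  rw [sup'_biUnion x hT hI, frechetCDF_sup' hT fun j _ ↦ ?_]
  · rfl
  · obtain ⟨i, hi⟩ := hI j
    exact (hx i).trans_le (le_sup' x hi)

lemma ae_pos_of_measure_le_eq_frechetCDF {Ω : Type*} [MeasurableSpace Ω] {μ : Measure Ω}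
    [IsFiniteMeasure μ] {Y : Ω → ℝ}
    (hY : ∀ t : ℝ, 0 < t → (μ {ω | Y ω ≤ t}).toReal = frechetCDF t) : ∀ᵐ ω ∂μ, 0 < Y ω := by
  have hle : (μ {ω | Y ω ≤ 0}).toReal ≤ 0 := by
    refine ge_of_tendsto tendsto_frechetCDF_nhdsGT_zero
      (eventually_mem_nhdsWithin.mono fun t (ht : 0 < t) ↦ ?_)
    rw [← hY t ht]
    exact ENNReal.toReal_mono (measure_ne_top _ _)
      (measure_mono fun ω (hω : Y ω ≤ 0) ↦ hω.trans ht.le)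
  have hzero : μ {ω | Y ω ≤ 0} = 0 :=
    ((ENNReal.toReal_eq_zero_iff _).1 (le_antisymm hle ENNReal.toReal_nonneg)).resolve_right
      (measure_ne_top _ _)
  simpa [ae_iff, not_lt] using hzero

end Frechet

lemma setOf_forall_imp_le_inv_indicator {Ω ι : Type*} [DecidableEq ι] (X : ι → Ω → ℝ)
    (S : Finset ι) :
    {ω | ∀ j, 0 < (if j ∈ S then (1 : ℝ) else 0) → X j ω ≤ (if j ∈ S then (1 : ℝ) else 0)⁻¹} =
      {ω | ∀ i ∈ S, X i ω ≤ 1} := by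
  ext ω
  refine forall_congr' fun j ↦ ?_
  split_ifs with hj <;> simp [hj]

def IsMaxStable {Ω ι : Type*} [MeasurableSpace Ω] (μ : Measure Ω) (X : ι → Ω → ℝ) : Prop :=
  ∀ t : ℝ, 0 < t → ∀ x : ι → ℝ, (∀ j, 0 < x j) →
    ((μ {ω | ∀ j, X j ω ≤ t * x j}).toReal) ^ t = (μ {ω | ∀ j, X j ω ≤ x j}).toReal

section MaxStable

variable {Ω ι : Type*} [MeasurableSpace Ω] {μ : Measure Ω} {X : ι → Ω → ℝ}

lemma tendsto_measure_forall_le_ite [DecidableEq ι] [Finite ι] [IsFiniteMeasure μ]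
    (X : ι → Ω → ℝ) (S : Finset ι) (t : ℝ) :
    Tendsto (fun s : ℝ ↦ (μ {ω | ∀ j, X j ω ≤ if j ∈ S then t else s}).toReal) atTop
      (𝓝 (μ {ω | ∀ i ∈ S, X i ω ≤ t}).toReal) := by
  have hmono : Monotone fun s : ℝ ↦ {ω | ∀ j, X j ω ≤ if j ∈ S then t else s} := by
    intro s s' hss' ω hω j
    have := hω j
    split_ifs at this ⊢ <;> linarith
  have hunion : ⋃ s : ℝ, {ω | ∀ j, X j ω ≤ if j ∈ S then t else s} =
      {ω | ∀ i ∈ S, X i ω ≤ t} := by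
    ext ω
    simp only [Set.mem_iUnion, Set.mem_ofPred_eq]
    constructor
    · rintro ⟨s, hs⟩ i hi
      simpa [hi] using hs i
    · intro h
      obtain ⟨s, hs⟩ := Finite.exists_le fun j ↦ X j ω
      exact ⟨s, fun j ↦ by split_ifs with hj; exacts [h j hj, hs j]⟩
  have := tendsto_measure_iUnion_atTop (μ := μ) hmono
  rw [hunion] at this
  exact (ENNReal.tendsto_toReal (measure_ne_top μ _)).comp this

lemma ae_sup'_pos (hpos : ∀ᵐ ω ∂μ, ∀ i, 0 < X i ω) {S : Finset ι} (hS : S.Nonempty) :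
    ∀ᵐ ω ∂μ, 0 < S.sup' hS fun i ↦ X i ω := by
  obtain ⟨i, hi⟩ := id hS
  filter_upwards [hpos] with ω hω using (hω i).trans_le (le_sup' (fun i ↦ X i ω) hi)

lemma integrable_frechetCDF_sup' [IsFiniteMeasure μ] (hXm : ∀ i, Measurable (X i))
    (hpos : ∀ᵐ ω ∂μ, ∀ i, 0 < X i ω) {S : Finset ι} (hS : S.Nonempty) :
    Integrable (fun ω ↦ frechetCDF (S.sup' hS fun i ↦ X i ω)) μ := by
  refine Integrable.of_bound ?_ 1 ?_
  · have hM : Measurable fun ω ↦ S.sup' hS fun i ↦ X i ω := by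
      convert Finset.measurable_sup' hS fun i _ ↦ hXm i using 1
      exact funext fun ω ↦ (Finset.sup'_apply hS X ω).symm
    exact (measurable_frechetCDF.comp hM).aestronglyMeasurable
  · filter_upwards [ae_sup'_pos hpos hS] with ω hω
    rw [Real.norm_of_nonneg (frechetCDF_nonneg _)]
    exact frechetCDF_le_one hω.le

namespace IsMaxStable

variable [DecidableEq ι] [Finite ι]

lemma measure_forall_mem_le_rpow [IsFiniteMeasure μ] (hX : IsMaxStable μ X) (S : Finset ι)
    {t : ℝ} (ht : 0 < t) :
    (μ {ω | ∀ i ∈ S, X i ω ≤ t}).toReal ^ t = (μ {ω | ∀ i ∈ S, X i ω ≤ 1}).toReal := by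
  have hscaled : ∀ s : ℝ, 0 < s →
      (μ {ω | ∀ j, X j ω ≤ if j ∈ S then t else t * s}).toReal ^ t =
        (μ {ω | ∀ j, X j ω ≤ if j ∈ S then 1 else s}).toReal := fun s hs ↦ by
    simpa only [mul_ite, mul_one] using
      hX t ht (fun j ↦ if j ∈ S then 1 else s) fun j ↦ by split_ifs; exacts [one_pos, hs]
  refine tendsto_nhds_unique_of_eventuallyEq
    (((tendsto_measure_forall_le_ite X S t).comp (tendsto_id.const_mul_atTop ht)).rpow_const
      (Or.inr ht.le)) (tendsto_measure_forall_le_ite X S 1) ?_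
  filter_upwards [eventually_gt_atTop 0] with s hs using hscaled s hs

lemma measure_forall_mem_le_eq_rpow_inv [IsFiniteMeasure μ] (hX : IsMaxStable μ X)
    (S : Finset ι) {t : ℝ} (ht : 0 < t) :
    (μ {ω | ∀ i ∈ S, X i ω ≤ t}).toReal = (μ {ω | ∀ i ∈ S, X i ω ≤ 1}).toReal ^ t⁻¹ := by
  rw [← hX.measure_forall_mem_le_rpow S ht, Real.rpow_rpow_inv ENNReal.toReal_nonneg ht.ne']

lemma measure_forall_mem_le_one_pos [IsProbabilityMeasure μ] (hX : IsMaxStable μ X)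
    (S : Finset ι) : 0 < (μ {ω | ∀ i ∈ S, X i ω ≤ 1}).toReal := by
  have hlim := tendsto_measure_forall_le_ite (μ := μ) X ∅ 0
  simp only [notMem_empty, ↓reduceIte, IsEmpty.forall_iff, implies_true, Set.ofPred_true,
    measure_univ, ENNReal.toReal_one] at hlim
  obtain ⟨s, hs, hpos⟩ :=
    ((eventually_gt_atTop 0).and (hlim.eventually (lt_mem_nhds one_pos))).exists
  rw [← hX.measure_forall_mem_le_rpow S hs]
  have hsub : {ω | ∀ j, X j ω ≤ s} ⊆ {ω | ∀ i ∈ S, X i ω ≤ s} := fun ω hω i _ ↦ hω i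
  exact Real.rpow_pos_of_pos
    (hpos.trans_le (ENNReal.toReal_mono (measure_ne_top _ _) (measure_mono hsub))) s

lemma measure_frechetCDF_sup'_le [IsProbabilityMeasure μ] (hX : IsMaxStable μ X)
    (hpos : ∀ᵐ ω ∂μ, ∀ i, 0 < X i ω) {S : Finset ι} (hS : S.Nonempty) {u : ℝ}
    (hu : u ∈ Set.Ioo 0 1) :
    (μ {ω | frechetCDF (S.sup' hS fun i ↦ X i ω) ≤ u}).toReal =
      u ^ (-Real.log (μ {ω | ∀ i ∈ S, X i ω ≤ 1}).toReal) := by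
  have ht : 0 < (-Real.log u)⁻¹ := inv_pos.2 (neg_pos.2 (Real.log_neg hu.1 hu.2))
  have hset : {ω | frechetCDF (S.sup' hS fun i ↦ X i ω) ≤ u} =ᵐ[μ]
      {ω | ∀ i ∈ S, X i ω ≤ (-Real.log u)⁻¹} := by
    refine eventuallyEq_set.2 ?_
    filter_upwards [ae_sup'_pos hpos hS] with ω hω
    rw [← sup'_le_iff hS, ← frechetCDF_le_frechetCDF_iff hω ht, frechetCDF_inv_neg_log hu.1]
  rw [measure_congr hset, hX.measure_forall_mem_le_eq_rpow_inv S ht, inv_inv,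
    Real.rpow_def_of_pos (hX.measure_forall_mem_le_one_pos S), Real.rpow_def_of_pos hu.1]
  ring_nf

lemma integral_frechetCDF_sup' [IsProbabilityMeasure μ] (hX : IsMaxStable μ X)
    (hXm : ∀ i, Measurable (X i)) (hpos : ∀ᵐ ω ∂μ, ∀ i, 0 < X i ω) {S : Finset ι}
    (hS : S.Nonempty) :
    ∫ ω, frechetCDF (S.sup' hS fun i ↦ X i ω) ∂μ =
      -Real.log (μ {ω | ∀ i ∈ S, X i ω ≤ 1}).toReal /
        (1 + -Real.log (μ {ω | ∀ i ∈ S, X i ω ≤ 1}).toReal) := by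
  have hlog : Real.log (μ {ω | ∀ i ∈ S, X i ω ≤ 1}).toReal ≤ 0 :=
    Real.log_nonpos ENNReal.toReal_nonneg measureReal_le_one
  refine integral_eq_div_one_add_of_measure_le_eq_rpow (integrable_frechetCDF_sup' hXm hpos hS)
    (ae_of_all _ fun ω ↦ frechetCDF_nonneg _)
    ((ae_sup'_pos hpos hS).mono fun ω hω ↦ frechetCDF_le_one hω.le) (by linarith)
    fun u hu ↦ hX.measure_frechetCDF_sup'_le hpos hS hu

end IsMaxStable

end MaxStable

theorem stmt7_general
    {Ω : Type*} [MeasurableSpace Ω] (μ : Measure Ω) [IsProbabilityMeasure μ]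
    {d p : ℕ} (hp : 0 < p)
    (X : Fin d → Ω → ℝ) (hXm : ∀ j, Measurable (X j))
    (hmarg : ∀ j, ∀ t : ℝ, 0 < t → (μ {ω | X j ω ≤ t}).toReal = frechetCDF t)
    (hms : ∀ t : ℝ, 0 < t → ∀ x : Fin d → ℝ, (∀ j, 0 < x j) →
      ((μ {ω | ∀ j, X j ω ≤ t * x j}).toReal) ^ t = (μ {ω | ∀ j, X j ω ≤ x j}).toReal)
    (l : (Fin d → ℝ) → ℝ)
    (hl : ∀ x : Fin d → ℝ, (∀ j, 0 ≤ x j) →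
      l x = - Real.log ((μ {ω | ∀ j, 0 < x j → X j ω ≤ (x j)⁻¹}).toReal))
    (I : Fin p → Finset (Fin d)) (hIne : ∀ j, (I j).Nonempty)
    (hcover : ∀ i, ∃ j, i ∈ I j)
    -- extremal coefficients of subvectors
    (ε : Finset (Fin d) → ℝ)
    (hε : ∀ S, ε S = l (fun i => if i ∈ S then 1 else 0)) :
    ∫ ω, (Finset.univ.sup' ⟨⟨0, hp⟩, Finset.mem_univ _⟩
          (fun j => frechetCDF ((I j).sup' (hIne j) (fun i => X i ω)))
        - Finset.univ.inf' ⟨⟨0, hp⟩, Finset.mem_univ _⟩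
          (fun j => frechetCDF ((I j).sup' (hIne j) (fun i => X i ω)))) ∂μ
      = ε Finset.univ / (1 + ε Finset.univ)
        - ∑ T ∈ ((Finset.univ : Finset (Fin p)).powerset.erase ∅),
            (-1 : ℝ) ^ (T.card + 1) * (ε (T.biUnion I) / (1 + ε (T.biUnion I))) := by
  have hpos : ∀ᵐ ω ∂μ, ∀ i, 0 < X i ω :=
    ae_all_iff.2 fun i ↦ ae_pos_of_measure_le_eq_frechetCDF (hmarg i)
  have hε_eq : ∀ S, ε S = -Real.log (μ {ω | ∀ i ∈ S, X i ω ≤ 1}).toReal := fun S ↦ by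
    rw [hε, hl _ fun j ↦ by positivity, setOf_forall_imp_le_inv_indicator]
  set G : Fin p → Ω → ℝ := fun j ω ↦ frechetCDF ((I j).sup' (hIne j) fun i ↦ X i ω)
  have hblock : ∀ T : Finset (Fin p), (hT : T.Nonempty) → (fun ω ↦ supOrZero (G · ω) T) =ᵐ[μ]
      fun ω ↦ frechetCDF ((T.biUnion I).sup' (hT.biUnion fun j _ ↦ hIne j) fun i ↦ X i ω) :=
    fun T hT ↦ by
      filter_upwards [hpos] with ω hω
      rw [supOrZero_of_nonempty _ hT, frechetCDF_sup'_biUnion hT hIne hω]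
  have hint : ∀ T : Finset (Fin p), T.Nonempty → Integrable (fun ω ↦ supOrZero (G · ω) T) μ :=
    fun T hT ↦ (integrable_frechetCDF_sup' hXm hpos _).congr (hblock T hT).symm
  have hexp : ∀ T : Finset (Fin p), T.Nonempty →
      ∫ ω, supOrZero (G · ω) T ∂μ = ε (T.biUnion I) / (1 + ε (T.biUnion I)) := fun T hT ↦ by
    rw [integral_congr_ae (hblock T hT), IsMaxStable.integral_frechetCDF_sup' hms hXm hpos,
      hε_eq]
  have hne : ∀ T ∈ (univ : Finset (Fin p)).powerset.erase ∅, T.Nonempty := fun T hT ↦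
    nonempty_iff_ne_empty.2 (ne_of_mem_erase hT)
  have huniv : univ.biUnion I = univ := eq_univ_of_forall fun i ↦
    let ⟨j, hj⟩ := hcover i; mem_biUnion.2 ⟨j, mem_univ j, hj⟩
  have hp' : (univ : Finset (Fin p)).Nonempty := ⟨⟨0, hp⟩, mem_univ _⟩
  show ∫ ω, (univ.sup' hp' (G · ω) - univ.inf' hp' (G · ω)) ∂μ = _
  simp_rw [← supOrZero_of_nonempty _ hp', inf'_eq_sum_powerset_erase_supOrZero]
  rw [integral_sub (hint _ hp') (integrable_finsetSum _ fun T hT ↦ (hint T (hne T hT)).const_mul _),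
    integral_finsetSum _ fun T hT ↦ (hint T (hne T hT)).const_mul _, hexp _ hp', huniv]
  refine congrArg _ (sum_congr rfl fun T hT ↦ ?_)
  rw [integral_const_mul, hexp T (hne T hT)]

/-- With λ = (1,...,1), the max-min coefficient is expressed via extremal
coefficients of the unions of blocks. -/
theorem stmt7
    {Ω : Type*} [MeasurableSpace Ω] (μ : Measure Ω) [IsProbabilityMeasure μ]
    {d p : ℕ} (hd : 0 < d) (hp : 0 < p)
    (X : Fin d → Ω → ℝ) (hXm : ∀ j, Measurable (X j))
    (hmarg : ∀ j, ∀ t : ℝ, 0 < t → (μ {ω | X j ω ≤ t}).toReal = frechetCDF t)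
    (hms : ∀ t : ℝ, 0 < t → ∀ x : Fin d → ℝ, (∀ j, 0 < x j) →
      ((μ {ω | ∀ j, X j ω ≤ t * x j}).toReal) ^ t = (μ {ω | ∀ j, X j ω ≤ x j}).toReal)
    (l : (Fin d → ℝ) → ℝ)
    (hl : ∀ x : Fin d → ℝ, (∀ j, 0 ≤ x j) →
      l x = - Real.log ((μ {ω | ∀ j, 0 < x j → X j ω ≤ (x j)⁻¹}).toReal))
    (I : Fin p → Finset (Fin d)) (hIne : ∀ j, (I j).Nonempty)
    (hdisj : ∀ j k, j ≠ k → Disjoint (I j) (I k)) (hcover : ∀ i, ∃ j, i ∈ I j)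
    -- extremal coefficients of subvectors
    (ε : Finset (Fin d) → ℝ)
    (hε : ∀ S, ε S = l (fun i => if i ∈ S then 1 else 0)) :
    ∫ ω, (Finset.univ.sup' ⟨⟨0, hp⟩, Finset.mem_univ _⟩
          (fun j => frechetCDF ((I j).sup' (hIne j) (fun i => X i ω)))
        - Finset.univ.inf' ⟨⟨0, hp⟩, Finset.mem_univ _⟩
          (fun j => frechetCDF ((I j).sup' (hIne j) (fun i => X i ω)))) ∂μ
      = ε Finset.univ / (1 + ε Finset.univ)
        - ∑ T ∈ ((Finset.univ : Finset (Fin p)).powerset.erase ∅),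
            (-1 : ℝ) ^ (T.card + 1) * (ε (T.biUnion I) / (1 + ε (T.biUnion I))) :=
  stmt7_general μ hp X hXm hmarg hms l hl I hIne hcover ε hε
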